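/- Let p and q be coprime positive integers and set t = πp/q. Then for every integer j there exists a real constant c (depending on p, q, j) such that for every real x with πj/q < x < π(j+1)/q, the symmetric partial sums 1/2 − (2/π)·Σ_{m=0}^{N} sin((2m+1)x − (2m+1)³ t)/(2m+1) converge to c as N → ∞. In other words, at the rational time t = πp/q the solution of the periodic Riemann problem for the Airy equation is constant on every subinterval (πj/q, π(j+1)/q). -/

import Mathlib

/-!
At `t = πp/q` the phase `k ↦ exp(-i k³ t)` is `2q`-periodic in `k`, and `k ↦ -k` conjugates it, so
its discrete Fourier transform on `ZMod (2q)` is real. Fourier inversion then writes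
`sin(kx - k³t)` as one fixed real combination of the `sin(k(x + πl/q))`, so the Airy partial sums
are that combination of partial sums of the square-wave series `∑ sin((2m+1)θ)/(2m+1)` at the
shifted points `x + πl/q`. These converge wherever `sin θ ≠ 0` (Dirichlet's test), and their
difference at two points `a, b` is `∫_a^b sin(2Ns)/(2 sin s) ds`, which tends to `0` by the
Riemann–Lebesgue lemma as long as `sin` has no zero between `a` and `b`. For `x` in
`(πj/q, π(j+1)/q)` each shifted point stays in an interval free of zeros of `sin`, hence the limit
does not depend on `x`.
-/

open Real Filter Finset MeasureTheory Topology Set ZMod ComplexConjugate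

theorem tendsto_integral_exp_mul_I_mul (f : ℝ → ℂ) :
    Tendsto (fun w : ℝ => ∫ s : ℝ, Complex.exp ((w * s : ℝ) * Complex.I) * f s) atTop (𝓝 0) := by
  have hw : Tendsto (fun w : ℝ => -(w / (2 * π))) atTop (cocompact ℝ) :=
    (tendsto_neg_atTop_atBot.comp (tendsto_id.atTop_div_const (by positivity))).mono_right
      atBot_le_cocompact
  refine ((Real.tendsto_integral_exp_smul_cocompact f).comp hw).congr fun w => ?_
  refine integral_congr_ae (.of_forall fun s => ?_)
  simp only [Circle.smul_def, Real.fourierChar_apply, smul_eq_mul]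
  congr 2
  push_cast
  field_simp

theorem tendsto_intervalIntegral_sin_mul {a b : ℝ} {g : ℝ → ℝ}
    (hg : IntervalIntegrable g volume a b) :
    Tendsto (fun w : ℝ => ∫ s in a..b, sin (w * s) * g s) atTop (𝓝 0) := by
  wlog hab : a ≤ b generalizing a b
  · simpa only [intervalIntegral.integral_symm b a, neg_zero] using
      (this hg.symm (le_of_not_ge hab)).neg
  set f : ℝ → ℂ := (Ioc a b).indicator fun s => (g s : ℂ)
  have hf : Integrable f := by
    rw [integrable_indicator_iff measurableSet_Ioc]
    exact (hg.1).ofReal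
  refine (Complex.continuous_im.tendsto 0 |>.comp (tendsto_integral_exp_mul_I_mul f)).congr
    fun w => ?_
  have hint : Integrable fun s : ℝ => Complex.exp ((w * s : ℝ) * Complex.I) * f s := by
    refine hf.bdd_mul (c := 1) (by fun_prop) (.of_forall fun s => ?_)
    rw [Complex.norm_exp_ofReal_mul_I]
  rw [Function.comp_apply, ← RCLike.im_to_complex, ← integral_im hint,
    intervalIntegral.integral_of_le hab, ← integral_indicator measurableSet_Ioc]
  refine integral_congr_ae (.of_forall fun s => ?_)
  by_cases hs : s ∈ Ioc a b
  · simp only [f, indicator_of_mem hs, RCLike.im_to_complex, Complex.im_mul_ofReal,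
      Complex.exp_ofReal_mul_I_im]
  · simp [f, hs]

theorem two_mul_sin_mul_sum_range_sin_odd (s : ℝ) (N : ℕ) :
    2 * sin s * ∑ m ∈ range N, sin ((2 * m + 1) * s) = 1 - cos (2 * N * s) := by
  induction N with
  | zero => simp
  | succ N ih =>
    rw [sum_range_succ, mul_add, ih, two_mul_sin_mul_sin]
    push_cast
    rw [show s - (2 * N + 1) * s = -(2 * N * s) by ring, cos_neg]
    ring_nf

theorem two_mul_sin_mul_sum_range_cos_odd (s : ℝ) (N : ℕ) :
    2 * sin s * ∑ m ∈ range N, cos ((2 * m + 1) * s) = sin (2 * N * s) := by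
  induction N with
  | zero => simp
  | succ N ih =>
    rw [sum_range_succ, mul_add, ih, two_mul_sin_mul_cos]
    push_cast
    rw [show s - (2 * N + 1) * s = -(2 * N * s) by ring, sin_neg]
    ring_nf

noncomputable def oddSineSum (θ : ℝ) (N : ℕ) : ℝ :=
  ∑ m ∈ range N, sin ((2 * m + 1) * θ) / (2 * m + 1)

theorem abs_sum_range_sin_odd_le {θ : ℝ} (hθ : sin θ ≠ 0) (N : ℕ) :
    |∑ m ∈ range N, sin ((2 * m + 1) * θ)| ≤ 1 / |sin θ| := by
  have h := congrArg abs (two_mul_sin_mul_sum_range_sin_odd θ N)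
  rw [abs_mul, abs_mul, abs_two] at h
  have hcos : |1 - cos (2 * N * θ)| ≤ 2 :=
    abs_le.2 ⟨by linarith [cos_le_one (2 * N * θ)], by linarith [neg_one_le_cos (2 * N * θ)]⟩
  rw [le_div_iff₀' (abs_pos.2 hθ)]
  linarith

theorem cauchySeq_oddSineSum {θ : ℝ} (hθ : sin θ ≠ 0) : CauchySeq (oddSineSum θ) := by
  have hanti : Antitone fun m : ℕ => (2 * (m : ℝ) + 1)⁻¹ := fun a b hab =>
    inv_anti₀ (by positivity) (by gcongr)
  have hzero : Tendsto (fun m : ℕ => (2 * (m : ℝ) + 1)⁻¹) atTop (𝓝 0) :=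
    tendsto_inv_atTop_zero.comp <| tendsto_atTop_add_const_right _ _ <|
      tendsto_natCast_atTop_atTop.const_mul_atTop two_pos
  convert hanti.cauchySeq_series_mul_of_tendsto_zero_of_bounded hzero
    (z := fun m : ℕ => sin ((2 * m + 1) * θ))
    fun N => (Real.norm_eq_abs _).trans_le (abs_sum_range_sin_odd_le hθ N) using 2 with N
  simp only [oddSineSum, smul_eq_mul, div_eq_inv_mul]

theorem oddSineSum_sub_eq_integral (a b : ℝ) (N : ℕ) :
    oddSineSum b N - oddSineSum a N = ∫ s in a..b, ∑ m ∈ range N, cos ((2 * m + 1) * s) := by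
  rw [intervalIntegral.integral_finsetSum fun (m : ℕ) _ =>
      (by fun_prop : Continuous fun s : ℝ => cos ((2 * (m : ℝ) + 1) * s)).intervalIntegrable a b,
    oddSineSum, oddSineSum, ← sum_sub_distrib]
  refine sum_congr rfl fun m _ => ?_
  rw [intervalIntegral.integral_comp_mul_left (fun s => cos s) (by positivity), integral_cos,
    smul_eq_mul]
  ring

theorem tendsto_oddSineSum_sub {a b : ℝ} (h : ∀ s ∈ uIcc a b, sin s ≠ 0) :
    Tendsto (fun N => oddSineSum b N - oddSineSum a N) atTop (𝓝 0) := by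
  have h₂ : ∀ s ∈ uIcc a b, 2 * sin s ≠ 0 := fun s hs => mul_ne_zero two_ne_zero (h s hs)
  have hg : IntervalIntegrable (fun s => (2 * sin s)⁻¹) volume a b :=
    (ContinuousOn.inv₀ (by fun_prop) h₂).intervalIntegrable
  have hN : Tendsto (fun N : ℕ => 2 * (N : ℝ)) atTop atTop :=
    tendsto_natCast_atTop_atTop.const_mul_atTop two_pos
  refine ((tendsto_intervalIntegral_sin_mul hg).comp hN).congr fun N => ?_
  rw [Function.comp_apply, oddSineSum_sub_eq_integral]
  refine intervalIntegral.integral_congr fun s hs => ?_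
  rw [← two_mul_sin_mul_sum_range_cos_odd, mul_comm, inv_mul_cancel_left₀ (h₂ s hs)]

theorem exists_tendsto_oddSineSum_of_ordConnected {S : Set ℝ} (hS : S.OrdConnected)
    (h : ∀ θ ∈ S, sin θ ≠ 0) : ∃ L, ∀ θ ∈ S, Tendsto (oddSineSum θ) atTop (𝓝 L) := by
  rcases S.eq_empty_or_nonempty with rfl | ⟨θ₀, hθ₀⟩
  · exact ⟨0, by simp⟩
  obtain ⟨L, hL⟩ := cauchySeq_tendsto_of_complete (cauchySeq_oddSineSum (h θ₀ hθ₀))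
  refine ⟨L, fun θ hθ => ?_⟩
  simpa using (tendsto_oddSineSum_sub fun s hs => h s (hS.uIcc_subset hθ₀ hθ hs)).add hL

theorem sin_ne_zero_of_mem_Ioo_div {q : ℕ} (hq : 0 < q) {n : ℤ} {θ : ℝ}
    (hθ : θ ∈ Ioo (π * n / q) (π * (n + 1) / q)) : sin θ ≠ 0 := by
  intro hsin
  obtain ⟨k, rfl⟩ := sin_eq_zero_iff.1 hsin
  have hq' : (0 : ℝ) < q := by exact_mod_cast hq
  rw [Set.mem_Ioo, div_lt_iff₀ hq', lt_div_iff₀ hq', mul_right_comm, mul_comm _ π] at hθ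
  have h₁ : (n : ℝ) < k * q := lt_of_mul_lt_mul_left hθ.1 pi_pos.le
  have h₂ : (k : ℝ) * q < n + 1 := lt_of_mul_lt_mul_left hθ.2 pi_pos.le
  norm_cast at h₁ h₂
  omega

namespace ZMod

variable {N : ℕ} [NeZero N]

theorem conj_dft_of_neg_eq_conj {Φ : ZMod N → ℂ} (hΦ : ∀ j, Φ (-j) = conj (Φ j)) (k : ZMod N) :
    conj (𝓕 Φ k) = 𝓕 Φ k := by
  rw [dft_apply, map_sum]
  refine Fintype.sum_equiv (Equiv.neg _) _ _ fun j => ?_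
  rw [smul_eq_mul, smul_eq_mul, map_mul, ← AddChar.map_neg_eq_conj, ← hΦ, Equiv.neg_apply, neg_mul,
    neg_neg]

theorem eq_sum_re_dft_mul_stdAddChar {Φ : ZMod N → ℂ} (hΦ : ∀ j, Φ (-j) = conj (Φ j))
    (k : ZMod N) : Φ k = ∑ l : ZMod N, ((N : ℝ)⁻¹ * (𝓕 Φ l).re : ℝ) * stdAddChar (l * k) := by
  conv_lhs => rw [← dft.symm_apply_apply Φ, invDFT_apply, smul_eq_mul, mul_sum]
  refine sum_congr rfl fun l _ => ?_
  push_cast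
  rw [smul_eq_mul, Complex.conj_eq_iff_re.1 (conj_dft_of_neg_eq_conj hΦ l)]
  ring

theorem im_exp_mul_eq_sum_sin {Φ : ZMod N → ℂ} (hΦ : ∀ j, Φ (-j) = conj (Φ j)) (k : ℤ) (x : ℝ) :
    (Complex.exp (↑(k * x) * Complex.I) * Φ k).im =
      ∑ l : ZMod N, (N : ℝ)⁻¹ * (𝓕 Φ l).re * sin (k * (x + 2 * π * l.val / N)) := by
  rw [eq_sum_re_dft_mul_stdAddChar hΦ, mul_sum, Complex.im_sum]
  refine sum_congr rfl fun l _ => ?_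
  have hchar :
      stdAddChar (l * (k : ZMod N)) = Complex.exp (2 * π * Complex.I * (l.val * k) / N) := by
    have := stdAddChar_coe (N := N) (l.val * k)
    push_cast at this
    rwa [natCast_zmod_val] at this
  rw [hchar, mul_left_comm, ← Complex.exp_add, Complex.im_ofReal_mul]
  congr 1
  rw [← Complex.exp_ofReal_mul_I_im]
  congr 2
  push_cast
  ring

end ZMod

theorem cexp_cube_mul_eq_of_dvd_sub {N : ℕ} {t : ℝ} {n : ℤ} (hNt : N * t = 2 * π * n)
    {k r : ℤ} (h : (N : ℤ) ∣ k - r) :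
    Complex.exp (↑(-(k ^ 3 * t)) * Complex.I) = Complex.exp (↑(-(r ^ 3 * t)) * Complex.I) := by
  obtain ⟨m, hm⟩ := h
  rw [Complex.exp_eq_exp_iff_exists_int]
  refine ⟨-(n * m * (k ^ 2 + k * r + r ^ 2)), ?_⟩
  have hm' : (k : ℂ) - r = N * m := by exact_mod_cast hm
  have hNt' : (N : ℂ) * t = 2 * π * n := by exact_mod_cast hNt
  push_cast
  linear_combination (-(k ^ 2 + k * r + r ^ 2) * Complex.I) * (t * hm' + m * hNt')

-- Well defined as a function of `k mod N` once `N t ∈ 2πℤ`, see `cubicPhase_intCast`.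
noncomputable def cubicPhase (N : ℕ) (t : ℝ) (k : ZMod N) : ℂ :=
  Complex.exp (↑(-(k.val ^ 3 * t)) * Complex.I)

section CubicPhase

variable {N : ℕ} [NeZero N] {t : ℝ} {n : ℤ}

theorem cubicPhase_intCast (hNt : N * t = 2 * π * n) (k : ℤ) :
    cubicPhase N t k = Complex.exp (↑(-(k ^ 3 * t)) * Complex.I) := by
  rw [cubicPhase, cexp_cube_mul_eq_of_dvd_sub hNt (Int.mod_modEq k N).dvd, ← ZMod.val_intCast]
  norm_cast

theorem cubicPhase_neg (hNt : N * t = 2 * π * n) (j : ZMod N) :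
    cubicPhase N t (-j) = conj (cubicPhase N t j) := by
  rw [← ZMod.intCast_zmod_cast j, ← Int.cast_neg, cubicPhase_intCast hNt, cubicPhase_intCast hNt,
    ← Complex.exp_conj]
  congr 1
  rw [map_mul, Complex.conj_ofReal, Complex.conj_I]
  push_cast
  ring

theorem sin_sub_cube_mul_eq_sum (hNt : N * t = 2 * π * n) (k : ℤ) (x : ℝ) :
    sin (k * x - k ^ 3 * t) =
      ∑ l : ZMod N, (N : ℝ)⁻¹ * (𝓕 (cubicPhase N t) l).re * sin (k * (x + 2 * π * l.val / N)) := by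
  rw [← im_exp_mul_eq_sum_sin (cubicPhase_neg hNt), cubicPhase_intCast hNt, ← Complex.exp_add,
    ← add_mul, ← Complex.ofReal_add, Complex.exp_ofReal_mul_I_im]
  ring_nf

theorem sum_range_sin_sub_cube_div_eq (hNt : N * t = 2 * π * n) (x : ℝ) (M : ℕ) :
    ∑ m ∈ range M, sin ((2 * m + 1) * x - (2 * m + 1) ^ 3 * t) / (2 * m + 1) =
      ∑ l : ZMod N, (N : ℝ)⁻¹ * (𝓕 (cubicPhase N t) l).re *
        oddSineSum (x + 2 * π * l.val / N) M := by
  simp_rw [oddSineSum, mul_sum]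
  rw [sum_comm]
  refine sum_congr rfl fun m _ => ?_
  have := sin_sub_cube_mul_eq_sum hNt (2 * m + 1) x
  push_cast at this
  rw [this, sum_div]
  exact sum_congr rfl fun l _ => by ring

end CubicPhase

theorem airy_rational_time_piecewise_constant
    (p q : ℕ) (hq : 0 < q) (j : ℤ) :
    ∃ c : ℝ, ∀ x : ℝ,
      Real.pi * (j : ℝ) / (q : ℝ) < x → x < Real.pi * ((j : ℝ) + 1) / (q : ℝ) →
      Filter.Tendsto
        (fun N : ℕ =>
          1 / 2 - (2 / Real.pi) *
            ∑ m ∈ Finset.range (N + 1),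
              Real.sin ((2 * (m : ℝ) + 1) * x
                  - (2 * (m : ℝ) + 1) ^ 3 * (Real.pi * (p : ℝ) / (q : ℝ)))
                / (2 * (m : ℝ) + 1))
        Filter.atTop (nhds c) := by
  have : NeZero (2 * q) := ⟨by omega⟩
  have hNt : ((2 * q : ℕ) : ℝ) * (π * p / q) = 2 * π * (p : ℤ) := by
    push_cast
    field_simp
  set a : ZMod (2 * q) → ℝ :=
    fun l => ((2 * q : ℕ) : ℝ)⁻¹ * (𝓕 (cubicPhase (2 * q) (π * p / q)) l).re
  have hshift (l : ZMod (2 * q)) {x : ℝ} (hx : x ∈ Ioo (π * j / q) (π * (j + 1) / q)) :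
      x + 2 * π * l.val / (2 * q : ℕ) ∈
        Ioo (π * (j + l.val : ℤ) / q) (π * ((j + l.val : ℤ) + 1) / q) := by
    have e₀ : 2 * π * l.val / (2 * q : ℕ) = π * l.val / q := by push_cast; field_simp
    have e₁ : π * ((j + l.val : ℤ) : ℝ) / q = π * j / q + π * l.val / q := by push_cast; ring
    have e₂ : π * (((j + l.val : ℤ) : ℝ) + 1) / q = π * (j + 1) / q + π * l.val / q := by
      push_cast; ring
    rw [e₀, e₁, e₂]
    exact ⟨by linarith [hx.1], by linarith [hx.2]⟩
  choose L hL using fun l : ZMod (2 * q) => exists_tendsto_oddSineSum_of_ordConnected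
    ordConnected_Ioo fun _ => sin_ne_zero_of_mem_Ioo_div hq (n := j + l.val)
  refine ⟨1 / 2 - 2 / π * ∑ l, a l * L l, fun x hx₁ hx₂ => ?_⟩
  simp_rw [sum_range_sin_sub_cube_div_eq hNt]
  refine ((tendsto_finsetSum _ fun l _ => ((hL l _ (hshift l ⟨hx₁, hx₂⟩)).comp
    (tendsto_add_atTop_nat 1)).const_mul (a l)).const_mul (2 / π)).const_sub (1 / 2)
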